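/- arXiv:1305.6304 — 6 statements merged into one kernel-verified Lean document; each statement's English description precedes it below -/
import Mathlib

section
/- For cuts Λ, Γ of an ordered abelian group and naturals d, k, m with k < m: (Λ − (m+d)Γ) + (mΓ − kΓ) ≤ Λ − (d+k)Γ. -/
set_option autoImplicit false

universe u v

/-- A Dedekind cut of a linearly ordered abelian group, represented by its left part
(`L = Λ^L`); the right part is the complement of `L`.  The cuts `-∞` (`L = ∅`) and
`+∞` (`L = G`) are included. -/
structure Cut (G : Type u) [AddCommGroup G] [LinearOrder G] [IsOrderedAddMonoid G] : Type u where
  L : Set G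
  lower : ∀ ⦃x y : G⦄, y ∈ L → x ≤ y → x ∈ L

namespace Cut

variable {G : Type u} [AddCommGroup G] [LinearOrder G] [IsOrderedAddMonoid G]

/-- Cuts are ordered by inclusion of left parts. -/
instance : PartialOrder (Cut G) where
  le Λ Γ := Λ.L ⊆ Γ.L
  le_refl _ := subset_rfl
  le_trans _ _ _ h h' := fun x hx => h' (h hx)
  le_antisymm := by
    rintro ⟨L₁, h₁⟩ ⟨L₂, h₂⟩ h h'
    simpa using Set.Subset.antisymm h h'

/-- `γ⁻`, the cut with left part `(-∞, γ)`. -/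
def lcut (γ : G) : Cut G := ⟨{x | x < γ}, fun _ _ hy hxy => lt_of_le_of_lt hxy hy⟩

/-- `γ⁺`, the cut with left part `(-∞, γ]`. -/
def rcut (γ : G) : Cut G := ⟨{x | x ≤ γ}, fun _ _ hy hxy => le_trans hxy hy⟩

/-- The left sum of cuts: the smallest cut whose left part contains all `λ + γ`
with `λ < Λ`, `γ < Γ`. -/
instance : Add (Cut G) :=
  ⟨fun Λ Γ => ⟨{x | ∃ l ∈ Λ.L, ∃ g ∈ Γ.L, x ≤ l + g}, by
    rintro x y ⟨l, hl, g, hg, hy⟩ hxy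
    exact ⟨l, hl, g, hg, hxy.trans hy⟩⟩⟩

/-- The right sum of cuts: the largest cut whose right part contains all `λ + γ`
with `λ > Λ`, `γ > Γ`. -/
def addR (Λ Γ : Cut G) : Cut G :=
  ⟨{x | ∀ l ∉ Λ.L, ∀ g ∉ Γ.L, x < l + g}, by
    intro x y hy hxy l hl g hg
    exact lt_of_le_of_lt hxy (hy l hl g hg)⟩

/-- The right difference of cuts: the largest cut whose right part contains all
`λ − γ` with `λ > Λ`, `γ < Γ`. -/
def sub (Λ Γ : Cut G) : Cut G :=
  ⟨{x | ∀ l ∉ Λ.L, ∀ g ∈ Γ.L, x < l - g}, by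
    intro x y hy hxy l hl g hg
    exact lt_of_le_of_lt hxy (hy l hl g hg)⟩

/-- Translation `γ + Λ` of a cut by a group element, with left part `{γ + λ : λ ∈ Λ^L}`. -/
def transl (γ : G) (Λ : Cut G) : Cut G :=
  ⟨(fun x => γ + x) '' Λ.L, by
    rintro x y ⟨l, hl, rfl⟩ hxy
    exact ⟨x - γ, Λ.lower hl (sub_le_iff_le_add'.mpr hxy), by show γ + (x - γ) = x; rw [add_comm, sub_add_cancel]⟩⟩

/-- Negation of a cut: `-Λ = (-Λ^R, -Λ^L)`. -/
def neg (Λ : Cut G) : Cut G :=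
  ⟨{x | -x ∉ Λ.L}, by
    intro x y hy hxy hx
    exact hy (Λ.lower hx (neg_le_neg hxy))⟩

/-- The `n`-fold left sum `Λ + Γ + ⋯ + Γ` (`Γ` added `n` times). -/
def addn (Λ Γ : Cut G) : ℕ → Cut G
  | 0 => Λ
  | n + 1 => addn Λ Γ n + Γ

/-- The `n`-fold right difference `Λ − Γ − ⋯ − Γ` (`Γ` subtracted `n` times). -/
def subn (Λ Γ : Cut G) : ℕ → Cut G
  | 0 => Λ
  | n + 1 => (subn Λ Γ n).sub Γ

/-- `nΓ = Γ + ⋯ + Γ` (`n` times); by convention `0 • Γ = 0⁺`, the neutral element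
of the left sum. -/
def nsmul : ℕ → Cut G → Cut G
  | 0, _ => rcut 0
  | 1, Γ => Γ
  | n + 2, Γ => nsmul (n + 1) Γ + Γ

/-- `ℤ`-multiples of a cut: `(-n)Γ := -(nΓ)`. -/
def zsmul (n : ℤ) (Γ : Cut G) : Cut G :=
  if 0 ≤ n then nsmul n.toNat Γ else (nsmul (-n).toNat Γ).neg

/-- `ℤΓ := sup {nΓ : n ∈ ℤ}`. -/
def zmul (Γ : Cut G) : Cut G :=
  ⟨⋃ n : ℤ, (zsmul n Γ).L, by
    intro x y hy hxy
    rcases Set.mem_iUnion.1 hy with ⟨n, hn⟩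
    exact Set.mem_iUnion.2 ⟨n, (zsmul n Γ).lower hn hxy⟩⟩

/-- `S⁺`: the smallest cut whose left part contains the set `S`. -/
def ofSet (s : Set G) : Cut G :=
  ⟨{x | ∃ γ ∈ s, x ≤ γ}, by
    rintro x y ⟨γ, hγ, hy⟩ hxy
    exact ⟨γ, hγ, hxy.trans hy⟩⟩

/-- The supremum (maximum) of two cuts. -/
def max (Λ Γ : Cut G) : Cut G :=
  ⟨Λ.L ∪ Γ.L, by
    rintro x y (hy | hy) hxy
    · exact Or.inl (Λ.lower hy hxy)
    · exact Or.inr (Γ.lower hy hxy)⟩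

/-- The infimum of a set of cuts. -/
def inf (s : Set (Cut G)) : Cut G :=
  ⟨{x | ∀ Λ ∈ s, x ∈ Λ.L}, by
    intro x y hy hxy Λ hΛ
    exact Λ.lower (hy Λ hΛ) hxy⟩

end Cut

/-- A valued field `K` (of equal characteristic) with value group `G`, a value group
section `t`, and an embedded residue field `k ⊆ K` (the residue field section is the
inclusion). The valuation is written additively, with `v 0 = ⊤`. -/
structure VData (K : Type u) (G : Type v) [Field K] [AddCommGroup G] [LinearOrder G] [IsOrderedAddMonoid G] where
  v : K → WithTop G
  k : Subfield K
  t : G → K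
  v_eq_top : ∀ x : K, v x = ⊤ ↔ x = 0
  v_mul : ∀ x y : K, v (x * y) = v x + v y
  v_sub : ∀ x y : K, min (v x) (v y) ≤ v (x - y)
  v_surj : ∀ γ : G, ∃ x : K, v x = (γ : WithTop G)
  v_t : ∀ γ : G, v (t γ) = (γ : WithTop G)
  t_neg : ∀ γ : G, t (-γ) = (t γ)⁻¹
  v_k : ∀ c ∈ k, c ≠ 0 → v c = (0 : WithTop G)
  k_res : ∀ x : K, v x = (0 : WithTop G) → ∃ c ∈ k, (0 : WithTop G) < v (x - c)

namespace VData

variable {K : Type u} {G : Type v} [Field K] [AddCommGroup G] [LinearOrder G] [IsOrderedAddMonoid G]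

/-- `O[Λ] = {x ∈ K : v(x) > Λ}`, the (possibly fractional) ideal of the valuation
ring associated with the cut `Λ`. -/
def Oc (S : VData K G) (Λ : Cut G) : Set K :=
  {x | ∀ γ : G, S.v x = (γ : WithTop G) → γ ∉ Λ.L}

/-- `O_R[Λ] = {x ∈ R : v(x) > Λ}`, for a subring `R` of `K`. -/
def OcR (S : VData K G) (R : Subring K) (Λ : Cut G) : Set K :=
  {x | x ∈ R ∧ ∀ γ : G, S.v x = (γ : WithTop G) → γ ∉ Λ.L}

end VData

/-- Axioms CA–CD of a (weak) tower of complements for the valued field `K`: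
each `A[Λ]` is a `k`-subspace of `K` (CA), `A[Λ] ⊕ O[Λ] = K` (CB),
`t(γ)·k ⊆ A[γ⁺]` (CC), and `Γ ≤ Λ ↔ A[Γ] ⊆ A[Λ]` (CD). -/
structure TowerBase {K : Type u} {G : Type v} [Field K] [AddCommGroup G] [LinearOrder G] [IsOrderedAddMonoid G]
    (S : VData K G) where
  A : Cut G → Set K
  zero_mem : ∀ Λ : Cut G, (0 : K) ∈ A Λ
  add_mem : ∀ Λ : Cut G, ∀ x ∈ A Λ, ∀ y ∈ A Λ, x + y ∈ A Λ
  smul_mem : ∀ Λ : Cut G, ∀ c ∈ S.k, ∀ x ∈ A Λ, c * x ∈ A Λ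
  disj : ∀ Λ : Cut G, ∀ x ∈ A Λ, x ∈ S.Oc Λ → x = 0
  spans : ∀ Λ : Cut G, ∀ x : K, ∃ a ∈ A Λ, ∃ o ∈ S.Oc Λ, x = a + o
  sec_mem : ∀ γ : G, ∀ c ∈ S.k, c * S.t γ ∈ A (Cut.rcut γ)
  mono : ∀ Γ Λ : Cut G, Γ ≤ Λ ↔ A Γ ⊆ A Λ

/-- A weak tower of complements: CA–CD together with CF (`A[γ+Λ] = t(γ)·A[Λ]`). -/
structure WeakTower {K : Type u} {G : Type v} [Field K] [AddCommGroup G] [LinearOrder G] [IsOrderedAddMonoid G]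
    (S : VData K G) extends TowerBase S where
  transl_eq : ∀ (γ : G) (Λ : Cut G),
    A (Cut.transl γ Λ) = (fun x => S.t γ * x) '' A Λ

/-- A tower of complements: CA–CD together with the multiplicativity axiom CE
(`A[Λ]·A[Γ] ⊆ A[Λ+Γ]`). -/
structure Tower {K : Type u} {G : Type v} [Field K] [AddCommGroup G] [LinearOrder G] [IsOrderedAddMonoid G]
    (S : VData K G) extends TowerBase S where
  mul_mem : ∀ Λ Γ : Cut G, ∀ x ∈ A Λ, ∀ y ∈ A Γ, x * y ∈ A (Λ + Γ)

/-- Axioms CA–CD of a (weak) tower of complements for a subring `R` of `K`. -/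
structure RTowerBase {K : Type u} {G : Type v} [Field K] [AddCommGroup G] [LinearOrder G] [IsOrderedAddMonoid G]
    (S : VData K G) (R : Subring K) where
  A : Cut G → Set K
  subset_R : ∀ Λ : Cut G, A Λ ⊆ (R : Set K)
  zero_mem : ∀ Λ : Cut G, (0 : K) ∈ A Λ
  add_mem : ∀ Λ : Cut G, ∀ x ∈ A Λ, ∀ y ∈ A Λ, x + y ∈ A Λ
  smul_mem : ∀ Λ : Cut G, ∀ c ∈ S.k, ∀ x ∈ A Λ, c * x ∈ A Λ
  disj : ∀ Λ : Cut G, ∀ x ∈ A Λ, x ∈ S.OcR R Λ → x = 0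
  spans : ∀ Λ : Cut G, ∀ x ∈ R, ∃ a ∈ A Λ, ∃ o ∈ S.OcR R Λ, x = a + o
  sec_mem : ∀ γ : G, ∀ c ∈ S.k, c * S.t γ ∈ A (Cut.rcut γ)
  mono : ∀ Γ Λ : Cut G, Γ ≤ Λ ↔ A Γ ⊆ A Λ

/-- A weak tower of complements for a subring `R` of `K`: CA–CD together with CF. -/
structure RWeakTower {K : Type u} {G : Type v} [Field K] [AddCommGroup G] [LinearOrder G] [IsOrderedAddMonoid G]
    (S : VData K G) (R : Subring K) extends RTowerBase S R where
  transl_eq : ∀ (γ : G) (Λ : Cut G),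
    A (Cut.transl γ Λ) = (fun x => S.t γ * x) '' A Λ

namespace RTowerBase

variable {K : Type u} {G : Type v} [Field K] [AddCommGroup G] [LinearOrder G] [IsOrderedAddMonoid G]
  {S : VData K G} {R : Subring K}

/-- The support of `x ∈ R` with respect to a (weak) tower of complements:
`γ ∈ supp x` iff the coefficient `a_γ(x)` in the decomposition
`x = x₁ + a_γ(x) t(γ) + x₃` (with `x₁ ∈ A[γ⁻]`, `v(x₃) > γ`) is nonzero, i.e.
iff `x ∉ A[γ⁻] + O[γ⁺]`. -/
def supp (T : RTowerBase S R) (x : K) : Set G :=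
  {γ | ¬ ∃ a ∈ T.A (Cut.lcut γ), ∃ o ∈ S.OcR R (Cut.rcut γ), x = a + o}

/-- `μ(x) := (supp x)⁺`, the smallest cut whose left part contains the support. -/
def mu (T : RTowerBase S R) (x : K) : Cut G :=
  Cut.ofSet (T.supp x)

end RTowerBase

namespace TowerBase

variable {K : Type u} {G : Type v} [Field K] [AddCommGroup G] [LinearOrder G] [IsOrderedAddMonoid G]
  {S : VData K G}

/-- `μ(x) := inf {Λ : x ∈ A[Λ]}`. -/
def muInf (T : TowerBase S) (x : K) : Cut G :=
  Cut.inf {Λ | x ∈ T.A Λ}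

end TowerBase

namespace RTowerBase

variable {K : Type u} {G : Type v} [Field K] [AddCommGroup G] [LinearOrder G] [IsOrderedAddMonoid G]
  {S : VData K G} {R : Subring K}

/-- `μ(x) := inf {Λ : x ∈ A[Λ]}`. -/
def muInf (T : RTowerBase S R) (x : K) : Cut G :=
  Cut.inf {Λ | x ∈ T.A Λ}

end RTowerBase

/-
Subtracting `Γ` passes a left summand in one direction, `A + (B − Γ) ≤ (A + B) − Γ`, and
`(A − mΓ) + mΓ ≤ A`. Hence
`(Λ − (m+d)Γ) + (mΓ − kΓ) ≤ ((Λ − dΓ − mΓ) + mΓ) − kΓ ≤ (Λ − dΓ) − kΓ = Λ − (d+k)Γ`.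
-/

namespace Cut

variable {G : Type u} [AddCommGroup G] [LinearOrder G] [IsOrderedAddMonoid G]

theorem mem_sub {A Γ : Cut G} {x : G} : x ∈ (A.sub Γ).L ↔ ∀ g ∈ Γ.L, x + g ∈ A.L := by
  constructor
  · intro h g hg
    by_contra hx
    simpa using h _ hx g hg
  · intro h l hl g hg
    refine lt_sub_iff_add_lt.2 (lt_of_not_ge fun hle => hl ?_)
    exact A.lower (h g hg) hle

theorem sub_mono {A B : Cut G} (Γ : Cut G) (h : A ≤ B) : A.sub Γ ≤ B.sub Γ :=
  fun _ hx => mem_sub.2 fun g hg => h (mem_sub.1 hx g hg)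

theorem subn_mono {A B : Cut G} (Γ : Cut G) (h : A ≤ B) : ∀ n, subn A Γ n ≤ subn B Γ n
  | 0 => h
  | n + 1 => sub_mono Γ (subn_mono Γ h n)

theorem subn_add (Λ Γ : Cut G) (a : ℕ) : ∀ b, subn Λ Γ (a + b) = subn (subn Λ Γ a) Γ b
  | 0 => rfl
  | b + 1 => congrArg (sub · Γ) (subn_add Λ Γ a b)

theorem add_sub_le (A B Γ : Cut G) : A + B.sub Γ ≤ (A + B).sub Γ := by
  rintro x ⟨a, ha, b, hb, hx⟩
  refine mem_sub.2 fun g hg => ⟨a, ha, b + g, mem_sub.1 hb g hg, ?_⟩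
  rw [← add_assoc]
  exact add_le_add_left hx g

theorem add_subn_le (A B Γ : Cut G) : ∀ k, A + subn B Γ k ≤ subn (A + B) Γ k
  | 0 => le_rfl
  | k + 1 => (add_sub_le A (subn B Γ k) Γ).trans (sub_mono Γ (add_subn_le A B Γ k))

theorem add_rcut_zero_le (A : Cut G) : A + rcut 0 ≤ A := by
  rintro x ⟨a, ha, g, hg, hx⟩
  exact A.lower ha (hx.trans (add_le_of_nonpos_right hg))

theorem sub_add_le (A Γ : Cut G) : A.sub Γ + Γ ≤ A := by
  rintro x ⟨a, ha, g, hg, hx⟩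
  exact A.lower (mem_sub.1 ha g hg) hx

theorem sub_add_add_le (A B Γ : Cut G) : A.sub Γ + (B + Γ) ≤ A + B := by
  rintro x ⟨a, ha, c, ⟨b, hb, g, hg, hc⟩, hx⟩
  refine ⟨a + g, mem_sub.1 ha g hg, b, hb, ?_⟩
  calc x ≤ a + c := hx
    _ ≤ a + (b + g) := add_le_add_right hc a
    _ = a + g + b := by abel

theorem subn_add_nsmul_le (A Γ : Cut G) : ∀ m, subn A Γ m + nsmul m Γ ≤ A
  | 0 => add_rcut_zero_le A
  | 1 => sub_add_le A Γ
  | m + 2 => (sub_add_add_le _ _ Γ).trans (subn_add_nsmul_le A Γ (m + 1))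

end Cut

theorem cut_d_k_m_general {G : Type u} [AddCommGroup G] [LinearOrder G] [IsOrderedAddMonoid G]
    (Λ Γ : Cut G) (d k m : ℕ) :
    Cut.subn Λ Γ (m + d) + Cut.subn (Cut.nsmul m Γ) Γ k ≤ Cut.subn Λ Γ (d + k) := by
  have hcancel : Cut.subn Λ Γ (m + d) + Cut.nsmul m Γ ≤ Cut.subn Λ Γ d := by
    rw [add_comm m d, Cut.subn_add]
    exact Cut.subn_add_nsmul_le _ Γ m
  calc Cut.subn Λ Γ (m + d) + Cut.subn (Cut.nsmul m Γ) Γ k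
      ≤ Cut.subn (Cut.subn Λ Γ (m + d) + Cut.nsmul m Γ) Γ k := Cut.add_subn_le _ _ Γ k
    _ ≤ Cut.subn (Cut.subn Λ Γ d) Γ k := Cut.subn_mono Γ hcancel k
    _ = Cut.subn Λ Γ (d + k) := (Cut.subn_add Λ Γ d k).symm

/-- For cuts `Λ, Γ` and naturals `d, k, m` with `k < m`:
`(Λ − (m+d)Γ) + (mΓ − kΓ) ≤ Λ − (d+k)Γ`. -/
theorem cut_d_k_m {G : Type u} [AddCommGroup G] [LinearOrder G] [IsOrderedAddMonoid G]
    (Λ Γ : Cut G) (d k m : ℕ) (hkm : k < m) :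
    Cut.subn Λ Γ (m + d) + Cut.subn (Cut.nsmul m Γ) Γ k ≤ Cut.subn Λ Γ (d + k) :=
  cut_d_k_m_general Λ Γ d k m
end

section
/- For cuts Λ, Λ', Γ of an ordered abelian group and naturals i, j, k, m, d with i, j, k < m and i + j = m + d: (Λ − iΓ) + (Λ' − jΓ) + (mΓ − kΓ) ≤ (Λ + Λ') − (d+k)Γ. -/
set_option autoImplicit false

universe u v

/-!
Both `Θ − nΓ` and `nΓ` are described by the set `n • Γ^L` of sums of `n` elements of `Γ^L`:
`x < Θ − nΓ` iff `x + s < Θ` for every such sum `s`, and `x < nΓ` iff `x ≤ s` for one of them.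
In these terms the inequality splits into `(Λ − iΓ) + (Λ' − jΓ) ≤ (Λ + Λ') − (m + d)Γ` and
`(Θ − (m + d)Γ) + (mΓ − kΓ) ≤ Θ − (d + k)Γ`, each of which only regroups sums of elements of `Γ^L`.
-/

open Pointwise

namespace Cut

variable {G : Type u} [AddCommGroup G] [LinearOrder G] [IsOrderedAddMonoid G]

theorem add_le_add_right {Λ₁ Λ₂ : Cut G} (h : Λ₁ ≤ Λ₂) (Γ : Cut G) : Λ₁ + Γ ≤ Λ₂ + Γ :=
  fun _ ⟨l, hl, g, hg, hx⟩ => ⟨l, h hl, g, hg, hx⟩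

theorem mem_sub_iff {Θ Γ : Cut G} {x : G} : x ∈ (Θ.sub Γ).L ↔ ∀ g ∈ Γ.L, x + g ∈ Θ.L := by
  refine ⟨fun hx g hg => by_contra fun h => ?_, fun hx l hl g hg => ?_⟩
  · simpa using hx (x + g) h g hg
  · exact lt_sub_iff_add_lt.mpr (lt_of_not_ge fun h => hl (Θ.lower (hx g hg) h))

theorem mem_subn_iff {Θ Γ : Cut G} {n : ℕ} {x : G} :
    x ∈ (subn Θ Γ n).L ↔ ∀ s ∈ n • Γ.L, x + s ∈ Θ.L := by
  induction n generalizing x with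
  | zero => simp [subn]
  | succ n ih =>
    simp only [subn, mem_sub_iff, ih, succ_nsmul', ← Set.image2_add,
      Set.forall_mem_image2, add_assoc]

theorem mem_nsmul_iff {Γ : Cut G} : ∀ {m : ℕ} {x : G}, x ∈ (nsmul m Γ).L ↔ ∃ s ∈ m • Γ.L, x ≤ s
  | 0, _ => by simp [nsmul, rcut]
  | 1, _ => ⟨fun hx => ⟨_, by simpa [nsmul] using hx, le_rfl⟩,
      fun ⟨_, hs, hx⟩ => Γ.lower (by simpa using hs) hx⟩
  | m + 2, x => by
    show (∃ l ∈ (nsmul (m + 1) Γ).L, ∃ g ∈ Γ.L, x ≤ l + g) ↔ _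
    simp only [mem_nsmul_iff, succ_nsmul _ (m + 1), ← Set.image2_add, Set.exists_mem_image2]
    constructor
    · rintro ⟨l, ⟨s, hs, hls⟩, g, hg, hx⟩
      exact ⟨s, hs, g, hg, hx.trans (by gcongr)⟩
    · rintro ⟨s, hs, g, hg, hx⟩
      exact ⟨s, ⟨s, hs, le_rfl⟩, g, hg, hx⟩

theorem subn_add_subn_le (Λ Λ' Γ : Cut G) (i j : ℕ) :
    subn Λ Γ i + subn Λ' Γ j ≤ subn (Λ + Λ') Γ (i + j) := by
  rintro x ⟨a, ha, b, hb, hx⟩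
  rw [mem_subn_iff] at ha hb ⊢
  intro s hs
  obtain ⟨si, hsi, sj, hsj, rfl⟩ := Set.mem_add.mp (add_nsmul Γ.L i j ▸ hs)
  refine ⟨a + si, ha si hsi, b + sj, hb sj hsj, ?_⟩
  calc x + (si + sj) ≤ a + b + (si + sj) := by gcongr
    _ = a + si + (b + sj) := by abel

theorem subn_add_subn_nsmul_le (Θ Γ : Cut G) (m d k : ℕ) :
    subn Θ Γ (m + d) + subn (nsmul m Γ) Γ k ≤ subn Θ Γ (d + k) := by
  rintro x ⟨y, hy, c, hc, hx⟩
  rw [mem_subn_iff] at hy hc ⊢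
  intro s hs
  obtain ⟨sd, hsd, sk, hsk, rfl⟩ := Set.mem_add.mp (add_nsmul Γ.L d k ▸ hs)
  obtain ⟨t, ht, hct⟩ := mem_nsmul_iff.mp (hc sk hsk)
  have hyt : y + (t + sd) ∈ Θ.L := hy _ (add_nsmul Γ.L m d ▸ Set.add_mem_add ht hsd)
  refine Θ.lower hyt ?_
  calc x + (sd + sk) ≤ y + c + (sd + sk) := by gcongr
    _ = y + (c + sk + sd) := by abel
    _ ≤ y + (t + sd) := by gcongr

end Cut

theorem cut_d_k_m_i_j_general {G : Type u} [AddCommGroup G] [LinearOrder G] [IsOrderedAddMonoid G]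
    (Λ Λ' Γ : Cut G) (i j k m d : ℕ)
    (hij : i + j = m + d) :
    Cut.subn Λ Γ i + Cut.subn Λ' Γ j + Cut.subn (Cut.nsmul m Γ) Γ k ≤
      Cut.subn (Λ + Λ') Γ (d + k) :=
  calc _ ≤ Cut.subn (Λ + Λ') Γ (m + d) + Cut.subn (Cut.nsmul m Γ) Γ k :=
        Cut.add_le_add_right (hij ▸ Cut.subn_add_subn_le Λ Λ' Γ i j) _
    _ ≤ _ := Cut.subn_add_subn_nsmul_le _ Γ m d k

/-- For cuts `Λ, Λ', Γ` and naturals `i, j, k, m, d` with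
`i, j, k < m` and `i + j = m + d`:
`(Λ − iΓ) + (Λ' − jΓ) + (mΓ − kΓ) ≤ (Λ + Λ') − (d+k)Γ`. -/
theorem cut_d_k_m_i_j {G : Type u} [AddCommGroup G] [LinearOrder G] [IsOrderedAddMonoid G]
    (Λ Λ' Γ : Cut G) (i j k m d : ℕ)
    (hi : i < m) (hj : j < m) (hk : k < m) (hij : i + j = m + d) :
    Cut.subn Λ Γ i + Cut.subn Λ' Γ j + Cut.subn (Cut.nsmul m Γ) Γ k ≤
      Cut.subn (Λ + Λ') Γ (d + k) :=
  cut_d_k_m_i_j_general Λ Λ' Γ i j k m d hij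
end

section
/- If a cut Γ of an ordered abelian group has the form Γ = γ + Γ̂ for some group element γ, where Γ̂ := Γ − Γ, then for all naturals k < m one has mΓ − kΓ = (m−k)Γ. -/
set_option autoImplicit false

universe u v

/-!
Because `Γ = γ + Γ̂`, every element of `Γ^L` is `γ` plus an element of `Γ̂^L`, and `γ ∈ Γ^L`.
Hence a cut `Λ` whose left part is closed under adding elements of `Γ̂^L` satisfies
`(Λ + Γ) − Γ = Λ`: if `x` lies in the difference, then `x + γ ∈ (Λ + Γ)^L`, so
`x ≤ λ + δ` with `λ ∈ Λ^L`, `δ ∈ Γ̂^L`. All multiples `nΓ` with `n ≥ 1` are closed in this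
sense, so `mΓ − kΓ = (m−k)Γ` follows by removing one `Γ` at a time.
-/

namespace Cut

variable {G : Type u} [AddCommGroup G] [LinearOrder G] [IsOrderedAddMonoid G]

theorem mem_sub_self_iff {Γ : Cut G} {x : G} :
    x ∈ (Γ.sub Γ).L ↔ ∀ g ∈ Γ.L, x + g ∈ Γ.L := by
  constructor
  · intro hx g hg
    by_contra hxg
    simpa using hx (x + g) hxg g hg
  · intro hx l hl g hg
    have hlt : x + g < l := lt_of_not_ge fun hle => hl (Γ.lower (hx g hg) hle)
    exact lt_sub_iff_add_lt.mpr hlt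

theorem add_sub_self_le (Γ : Cut G) : Γ + Γ.sub Γ ≤ Γ := by
  rintro x ⟨g, hg, d, hd, hx⟩
  exact Γ.lower (by simpa only [add_comm g] using mem_sub_self_iff.mp hd g hg) hx

theorem add_add_le_add {Λ Γ Δ : Cut G} (h : Λ + Δ ≤ Λ) : Λ + Γ + Δ ≤ Λ + Γ := by
  rintro x ⟨a, ⟨l, hl, g, hg, ha⟩, d, hd, hx⟩
  refine ⟨l + d, h ⟨l, hl, d, hd, le_rfl⟩, g, hg, ?_⟩
  calc x ≤ a + d := hx
    _ ≤ l + g + d := by gcongr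
    _ = l + d + g := add_right_comm l g d

theorem nsmul_succ_add_sub_self_le (Γ : Cut G) :
    ∀ n : ℕ, nsmul (n + 1) Γ + Γ.sub Γ ≤ nsmul (n + 1) Γ
  | 0 => add_sub_self_le Γ
  | n + 1 => add_add_le_add (nsmul_succ_add_sub_self_le Γ n)

theorem le_add_sub (Λ Γ : Cut G) : Λ ≤ (Λ + Γ).sub Γ := by
  intro x hx s hs g hg
  exact lt_of_not_ge fun hle => hs ⟨x, hx, g, hg, sub_le_iff_le_add.mp hle⟩

theorem add_sub_le_of_eq_transl {Λ Γ : Cut G} {γ : G} (hΓ : Γ = transl γ (Γ.sub Γ))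
    (hΛ : Λ + Γ.sub Γ ≤ Λ) : (Λ + Γ).sub Γ ≤ Λ := by
  have hγ : γ ∈ Γ.L := by
    rw [hΓ]
    exact ⟨0, mem_sub_self_iff.mpr fun g hg => by simpa using hg, add_zero γ⟩
  intro x hx
  have hxγ : x + γ ∈ (Λ + Γ).L := by
    by_contra h
    simpa using hx (x + γ) h γ hγ
  obtain ⟨l, hl, g, hg, hle⟩ := hxγ
  rw [hΓ] at hg
  obtain ⟨d, hd, rfl⟩ := hg
  refine hΛ ⟨l, hl, d, hd, ?_⟩
  have hle' : x + γ ≤ l + (γ + d) := hle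
  exact le_of_add_le_add_right (hle'.trans_eq (by rw [add_comm γ, add_assoc]))

theorem add_sub_cancel_of_eq_transl {Λ Γ : Cut G} {γ : G} (hΓ : Γ = transl γ (Γ.sub Γ))
    (hΛ : Λ + Γ.sub Γ ≤ Λ) : (Λ + Γ).sub Γ = Λ :=
  le_antisymm (add_sub_le_of_eq_transl hΓ hΛ) (le_add_sub Λ Γ)

end Cut

/-- If a cut `Γ` has the form `Γ = γ + Γ̂` for some group element `γ`,
where `Γ̂ := Γ − Γ`, then for all naturals `k < m` one has `mΓ − kΓ = (m−k)Γ`. -/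
theorem cut_nsmul_sub_nsmul {G : Type u} [AddCommGroup G] [LinearOrder G] [IsOrderedAddMonoid G]
    (Γ : Cut G) (γ : G) (hΓ : Γ = Cut.transl γ (Γ.sub Γ)) (k m : ℕ) (hkm : k < m) :
    Cut.subn (Cut.nsmul m Γ) Γ k = Cut.nsmul (m - k) Γ := by
  induction k with
  | zero => rfl
  | succ k ih =>
    obtain ⟨j, hj⟩ : ∃ j, m - k = j + 2 := ⟨m - k - 2, by omega⟩
    calc Cut.subn (Cut.nsmul m Γ) Γ (k + 1) = (Cut.nsmul (j + 1) Γ + Γ).sub Γ := by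
          rw [Cut.subn, ih (by omega), hj, Cut.nsmul]
      _ = Cut.nsmul (j + 1) Γ :=
          Cut.add_sub_cancel_of_eq_transl hΓ (Cut.nsmul_succ_add_sub_self_le Γ j)
      _ = Cut.nsmul (m - (k + 1)) Γ := by rw [show m - (k + 1) = j + 1 by omega]
end

section
/- Every tower of complements is a weak tower of complements; that is, if a family (A[Λ]) of k-subspaces indexed by cuts of G satisfies axioms CA–CD and the multiplicativity axiom CE (A[Λ]·A[Γ] ⊆ A[Λ+Γ]), then it also satisfies axiom CF: A[γ + Λ] = t(γ)·A[Λ] for all γ ∈ G and all cuts Λ. -/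
set_option autoImplicit false

universe u v

/-!
Since `t(γ) ∈ A[γ⁺]` and `γ⁺ + Λ ≤ γ + Λ`, axiom CE gives `t(γ)·A[Λ] ⊆ A[γ + Λ]`.
Applied to `-γ` and `γ + Λ` this yields `t(γ)⁻¹·A[γ + Λ] ⊆ A[Λ]`, the reverse inclusion.
-/

namespace Cut

variable {G : Type u} [AddCommGroup G] [LinearOrder G] [IsOrderedAddMonoid G]

theorem rcut_add_le_transl (δ : G) (Λ : Cut G) : rcut δ + Λ ≤ transl δ Λ := by
  rintro z ⟨l, hl, g, hg, hz⟩
  refine ⟨z - δ, Λ.lower hg ?_, add_sub_cancel δ z⟩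
  exact sub_le_iff_le_add'.2 (hz.trans (add_le_add_left hl g))

theorem transl_neg_transl (γ : G) (Λ : Cut G) : transl (-γ) (transl γ Λ) = Λ := by
  obtain ⟨L, hL⟩ := Λ
  simp only [transl, Set.image_image, neg_add_cancel_left, Set.image_id']

end Cut

namespace VData

variable {K : Type u} {G : Type v} [Field K] [AddCommGroup G] [LinearOrder G]
  [IsOrderedAddMonoid G] (S : VData K G)

theorem t_ne_zero (γ : G) : S.t γ ≠ 0 := fun h =>
  WithTop.coe_ne_top ((S.v_t γ).symm.trans ((S.v_eq_top _).2 h))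

theorem t_mul_t_neg_mul (γ : G) (x : K) : S.t γ * (S.t (-γ) * x) = x := by
  rw [S.t_neg, ← mul_assoc, mul_inv_cancel₀ (S.t_ne_zero γ), one_mul]

end VData

namespace TowerBase

variable {K : Type u} {G : Type v} [Field K] [AddCommGroup G] [LinearOrder G]
  [IsOrderedAddMonoid G] {S : VData K G} (T : TowerBase S)

theorem t_mem_rcut (γ : G) : S.t γ ∈ T.A (Cut.rcut γ) := by
  simpa using T.sec_mem γ 1 S.k.one_mem

theorem t_mul_mem_transl (mult : ∀ Λ Γ : Cut G, ∀ x ∈ T.A Λ, ∀ y ∈ T.A Γ, x * y ∈ T.A (Λ + Γ))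
    {γ : G} {Λ : Cut G} {x : K} (hx : x ∈ T.A Λ) : S.t γ * x ∈ T.A (Cut.transl γ Λ) :=
  (T.mono _ _).1 (Cut.rcut_add_le_transl γ Λ) (mult _ _ _ (T.t_mem_rcut γ) _ hx)

end TowerBase

/-- Every tower of complements is a weak tower of complements: if a
family `(A[Λ])` of `k`-subspaces indexed by cuts of `G` satisfies axioms CA–CD and
the multiplicativity axiom CE (`A[Λ]·A[Γ] ⊆ A[Λ+Γ]`), then it also satisfies axiom
CF: `A[γ + Λ] = t(γ)·A[Λ]` for all `γ ∈ G` and all cuts `Λ`. -/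
theorem tower_is_weakTower {K : Type u} {G : Type v}
    [Field K] [AddCommGroup G] [LinearOrder G] [IsOrderedAddMonoid G]
    (S : VData K G) (T : TowerBase S)
    (mult : ∀ Λ Γ : Cut G, ∀ x ∈ T.A Λ, ∀ y ∈ T.A Γ, x * y ∈ T.A (Λ + Γ)) :
    ∀ (γ : G) (Λ : Cut G), T.A (Cut.transl γ Λ) = (fun x => S.t γ * x) '' T.A Λ := by
  intro γ Λ
  ext y
  constructor
  · intro hy
    have hy' : S.t (-γ) * y ∈ T.A Λ := by
      simpa only [Cut.transl_neg_transl] using T.t_mul_mem_transl mult (γ := -γ) hy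
    exact ⟨_, hy', S.t_mul_t_neg_mul γ y⟩
  · rintro ⟨x, hx, rfl⟩
    exact T.t_mul_mem_transl mult hx
end

section
/- A weak tower of complements is uniquely determined by its member at the cut 0⁻: if two weak towers of complements (A[Λ]) and (A'[Λ]) for the same valued field K (with the same section t) satisfy A[0⁻] = A'[0⁻], then A[Λ] = A'[Λ] for all cuts Λ. -/
set_option autoImplicit false

universe u v

theorem Cut.ext_L {G : Type v} [AddCommGroup G] [LinearOrder G] [IsOrderedAddMonoid G]
    {Λ Γ : Cut G} (h : Λ.L = Γ.L) : Λ = Γ := by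
  cases Λ; cases Γ; simpa using h

theorem Cut.transl_lcut {G : Type v} [AddCommGroup G] [LinearOrder G] [IsOrderedAddMonoid G]
    (γ δ : G) : Cut.transl γ (Cut.lcut δ) = Cut.lcut (γ + δ) := by
  refine Cut.ext_L (Set.ext fun x => ⟨?_, fun hx => ⟨x - γ, ?_, add_sub_cancel γ x⟩⟩)
  · rintro ⟨l, hl, rfl⟩
    exact add_lt_add_right hl γ
  · exact sub_lt_iff_lt_add'.mpr hx

theorem Cut.le_lcut_of_notMem {G : Type v} [AddCommGroup G] [LinearOrder G]
    [IsOrderedAddMonoid G] {Λ : Cut G} {γ : G} (hγ : γ ∉ Λ.L) : Λ ≤ Cut.lcut γ :=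
  fun _ hl => lt_of_not_ge fun hle => hγ (Λ.lower hl hle)

theorem VData.mem_Oc_lcut_of_v_eq {K : Type u} {G : Type v} [Field K] [AddCommGroup G]
    [LinearOrder G] [IsOrderedAddMonoid G] (S : VData K G) {x : K} {γ : G}
    (hx : S.v x = γ) : x ∈ S.Oc (Cut.lcut γ) := by
  intro δ hδ
  rw [hx, WithTop.coe_inj] at hδ
  simp [Cut.lcut, hδ]

namespace TowerBase

variable {K : Type u} {G : Type v} [Field K] [AddCommGroup G] [LinearOrder G]
  [IsOrderedAddMonoid G] {S : VData K G}

theorem sub_mem (T : TowerBase S) {Λ : Cut G} {x y : K} (hx : x ∈ T.A Λ) (hy : y ∈ T.A Λ) :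
    x - y ∈ T.A Λ := by
  have hneg : (-1 : K) * y ∈ T.A Λ := T.smul_mem Λ (-1) (S.k.neg_mem S.k.one_mem) y hy
  simpa [sub_eq_add_neg] using T.add_mem Λ x hx _ hneg

/-- Each `A[Λ]` is recovered from the members `A[γ⁻]`: if `x ∈ A[Λ]` is written as `a + o`
with `a ∈ A'[Λ]` and `o ≠ 0` of value `γ > Λ`, then `o = x - a` lies in `A[γ⁻] ∩ O[γ⁻] = 0`. -/
theorem A_subset_of_lcut_subset (T T' : TowerBase S)
    (h : ∀ γ : G, T'.A (Cut.lcut γ) ⊆ T.A (Cut.lcut γ)) (Λ : Cut G) : T.A Λ ⊆ T'.A Λ := by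
  intro x hx
  obtain ⟨a, ha, o, ho, rfl⟩ := T'.spans Λ x
  obtain rfl | hne := eq_or_ne o 0
  · simpa using ha
  obtain ⟨γ, hγ⟩ := WithTop.ne_top_iff_exists.mp (mt (S.v_eq_top o).mp hne)
  have hΛγ : Λ ≤ Cut.lcut γ := Cut.le_lcut_of_notMem (ho γ hγ.symm)
  have hxγ : a + o ∈ T.A (Cut.lcut γ) := (T.mono _ _).mp hΛγ hx
  have haγ : a ∈ T.A (Cut.lcut γ) := h γ ((T'.mono _ _).mp hΛγ ha)
  have hoγ : o ∈ T.A (Cut.lcut γ) := by simpa using T.sub_mem hxγ haγ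
  exact absurd (T.disj _ o hoγ (S.mem_Oc_lcut_of_v_eq hγ.symm)) hne

end TowerBase

theorem WeakTower.A_lcut {K : Type u} {G : Type v} [Field K] [AddCommGroup G] [LinearOrder G]
    [IsOrderedAddMonoid G] {S : VData K G} (T : WeakTower S) (γ : G) :
    T.A (Cut.lcut γ) = (fun x => S.t γ * x) '' T.A (Cut.lcut 0) := by
  rw [← T.transl_eq, Cut.transl_lcut, add_zero]

/-- A weak tower of complements is uniquely determined by its member
at the cut `0⁻`: if two weak towers of complements for the same valued field `K`
(with the same section `t`) agree at `0⁻`, they agree at every cut. -/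
theorem weakTower_determined_by_zero {K : Type u} {G : Type v}
    [Field K] [AddCommGroup G] [LinearOrder G] [IsOrderedAddMonoid G]
    (S : VData K G) (T T' : WeakTower S)
    (h : T.A (Cut.lcut (0 : G)) = T'.A (Cut.lcut (0 : G))) :
    ∀ Λ : Cut G, T.A Λ = T'.A Λ := by
  have hlcut (γ : G) : T.A (Cut.lcut γ) = T'.A (Cut.lcut γ) := by
    rw [T.A_lcut, T'.A_lcut, h]
  intro Λ
  exact (T.A_subset_of_lcut_subset T'.toTowerBase (fun γ => (hlcut γ).ge) Λ).antisymm
    (T'.A_subset_of_lcut_subset T.toTowerBase (fun γ => (hlcut γ).le) Λ)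
end

section
/- Let (A[Λ]) be a weak tower of complements for a subring R of K, and for x ∈ R define μ(x) := (supp x)⁺, the supremum cut of the support of the power series expansion of x determined by the tower. Then: (1) x ∈ A[Λ] iff μ(x) ≤ Λ; (2) μ(x+y) ≤ max(μx, μy); (3) if the tower is multiplicative (a tower of complements), μ(xy) ≤ μx + μy (left sum of cuts). -/
set_option autoImplicit false

universe u v

/-!
Everything follows from one characterisation: for `x ∈ R`, `x ∈ A[Λ]` iff `supp x ⊆ Λ^L`.
If `x ∈ A[Λ]` and `γ > Λ`, then `x ∈ A[γ⁻]`, so `x = x + 0` exhibits `γ ∉ supp x`.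
Conversely write `x = a + o` with `a ∈ A[Λ]`, `v(o) > Λ`; if `o ≠ 0` put `γ = v(o)`.
Since `γ ∉ supp x`, also `x = a' + o'` with `a' ∈ A[γ⁻]` and `v(o') > γ`, so
`a' - a = o - o'` lies in `A[γ⁻]` and has value exactly `γ`, i.e. lies in `O[γ⁻]`,
which forces `a' = a` and `o = o'`, contradicting `v(o) < v(o')`.
Subadditivity of `μ` is the observation `supp (x + y) ⊆ supp x ∪ supp y`, and
multiplicativity follows by applying the characterisation to `x ∈ A[μx]`, `y ∈ A[μy]`.
-/

namespace Cut

variable {G : Type u} [AddCommGroup G] [LinearOrder G] [IsOrderedAddMonoid G]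

theorem le_lcut_of_notMem_s16 {Λ : Cut G} {γ : G} (h : γ ∉ Λ.L) : Λ ≤ lcut γ :=
  fun _ hx => lt_of_not_ge fun hle => h (Λ.lower hx hle)

theorem subset_ofSet (s : Set G) : s ⊆ (ofSet s).L :=
  fun γ hγ => ⟨γ, hγ, le_rfl⟩

theorem ofSet_le_iff {s : Set G} {Λ : Cut G} : ofSet s ≤ Λ ↔ s ⊆ Λ.L :=
  ⟨fun h => (subset_ofSet s).trans h, fun h _ ⟨_, hγ, hle⟩ => Λ.lower (h hγ) hle⟩

end Cut

namespace VData

variable {K : Type u} {G : Type v} [Field K] [AddCommGroup G] [LinearOrder G]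
  [IsOrderedAddMonoid G] (S : VData K G)

theorem v_zero : S.v 0 = ⊤ := (S.v_eq_top 0).2 rfl

theorem v_le_v_neg (x : K) : S.v x ≤ S.v (-x) := by
  simpa [S.v_zero] using S.v_sub 0 x

theorem v_neg (x : K) : S.v (-x) = S.v x :=
  le_antisymm (by simpa using S.v_le_v_neg (-x)) (S.v_le_v_neg x)

theorem min_le_v_add (x y : K) : min (S.v x) (S.v y) ≤ S.v (x + y) := by
  simpa [S.v_neg] using S.v_sub x (-y)

theorem v_sub_eq_of_lt {x y : K} (h : S.v x < S.v y) : S.v (x - y) = S.v x := by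
  refine le_antisymm ?_ (min_eq_left h.le ▸ S.v_sub x y)
  have h' := S.min_le_v_add (x - y) y
  rw [sub_add_cancel] at h'
  exact (min_le_iff.1 h').resolve_right (not_le.2 h)

variable {S} {R : Subring K} {γ : G} {z : K}

theorem mem_OcR_rcut_iff : z ∈ S.OcR R (Cut.rcut γ) ↔ z ∈ R ∧ (γ : WithTop G) < S.v z := by
  refine and_congr_right fun _ => ?_
  cases S.v z with
  | top => simp
  | coe g => simp [Cut.rcut]

theorem mem_OcR_lcut_iff : z ∈ S.OcR R (Cut.lcut γ) ↔ z ∈ R ∧ (γ : WithTop G) ≤ S.v z := by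
  refine and_congr_right fun _ => ?_
  cases S.v z with
  | top => simp
  | coe g => simp [Cut.lcut]

end VData

namespace RTowerBase

variable {K : Type u} {G : Type v} [Field K] [AddCommGroup G] [LinearOrder G]
  [IsOrderedAddMonoid G] {S : VData K G} {R : Subring K} (T : RTowerBase S R)

theorem sub_mem {Λ : Cut G} {a b : K} (ha : a ∈ T.A Λ) (hb : b ∈ T.A Λ) : a - b ∈ T.A Λ := by
  simpa [sub_eq_add_neg] using
    T.add_mem Λ a ha _ (T.smul_mem Λ (-1) (S.k.neg_mem S.k.one_mem) b hb)

theorem eq_zero_of_mem_lcut {γ : G} {a : K} (ha : a ∈ T.A (Cut.lcut γ))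
    (hv : (γ : WithTop G) ≤ S.v a) : a = 0 :=
  T.disj _ a ha (VData.mem_OcR_lcut_iff.2 ⟨T.subset_R _ ha, hv⟩)

theorem notMem_supp_iff {γ : G} {x : K} :
    γ ∉ T.supp x ↔ ∃ a ∈ T.A (Cut.lcut γ), ∃ o ∈ R, (γ : WithTop G) < S.v o ∧ x = a + o := by
  simp only [supp, Set.mem_ofPred_eq, not_not, VData.mem_OcR_rcut_iff, and_assoc]

theorem supp_subset_of_mem {Λ : Cut G} {x : K} (hx : x ∈ T.A Λ) : T.supp x ⊆ Λ.L := by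
  intro γ hγ
  by_contra hγΛ
  exact T.notMem_supp_iff.2 ⟨x, (T.mono _ _).1 (Cut.le_lcut_of_notMem_s16 hγΛ) hx, 0, R.zero_mem,
    by simp [S.v_zero], (add_zero x).symm⟩ hγ

theorem mem_of_supp_subset {Λ : Cut G} {x : K} (hxR : x ∈ R) (hsupp : T.supp x ⊆ Λ.L) :
    x ∈ T.A Λ := by
  obtain ⟨a, ha, o, ⟨-, hoΛ⟩, rfl⟩ := T.spans Λ x hxR
  suffices ho : o = 0 by simpa [ho] using ha
  by_contra ho
  obtain ⟨γ, hγ⟩ := WithTop.ne_top_iff_exists.1 (mt (S.v_eq_top o).1 ho)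
  have hγΛ : γ ∉ Λ.L := hoΛ γ hγ.symm
  obtain ⟨a', ha', o', -, ho', hsum⟩ := T.notMem_supp_iff.1 fun h => hγΛ (hsupp h)
  have hlt : S.v o < S.v o' := hγ ▸ ho'
  have hdiff : a' - a = o - o' := by linear_combination hsum.symm
  have hv : S.v (a' - a) = γ := by rw [hdiff, S.v_sub_eq_of_lt hlt, hγ]
  have hzero : a' - a = 0 :=
    T.eq_zero_of_mem_lcut (T.sub_mem ha' ((T.mono _ _).1 (Cut.le_lcut_of_notMem_s16 hγΛ) ha)) hv.ge
  rw [hzero, S.v_zero] at hv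
  exact WithTop.top_ne_coe hv

theorem mu_le_of_mem {Λ : Cut G} {x : K} (hx : x ∈ T.A Λ) : T.mu x ≤ Λ :=
  Cut.ofSet_le_iff.2 (T.supp_subset_of_mem hx)

theorem mem_iff_mu_le {Λ : Cut G} {x : K} (hx : x ∈ R) : x ∈ T.A Λ ↔ T.mu x ≤ Λ :=
  ⟨T.mu_le_of_mem, fun h => T.mem_of_supp_subset hx (Cut.ofSet_le_iff.1 h)⟩

theorem mem_mu {x : K} (hx : x ∈ R) : x ∈ T.A (T.mu x) :=
  (T.mem_iff_mu_le hx).2 le_rfl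

theorem supp_add_subset (x y : K) : T.supp (x + y) ⊆ T.supp x ∪ T.supp y := by
  intro γ hγ
  by_contra hxy
  obtain ⟨a, ha, o, hoR, ho, rfl⟩ := T.notMem_supp_iff.1 fun h => hxy (Or.inl h)
  obtain ⟨b, hb, p, hpR, hp, rfl⟩ := T.notMem_supp_iff.1 fun h => hxy (Or.inr h)
  exact T.notMem_supp_iff.2 ⟨a + b, T.add_mem _ a ha b hb, o + p, R.add_mem hoR hpR,
    (lt_min ho hp).trans_le (S.min_le_v_add o p), by ring⟩ hγ

theorem mu_add_le (x y : K) : T.mu (x + y) ≤ Cut.max (T.mu x) (T.mu y) :=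
  Cut.ofSet_le_iff.2 <| (T.supp_add_subset x y).trans <|
    Set.union_subset_union (Cut.subset_ofSet _) (Cut.subset_ofSet _)

theorem mu_mul_le (hmul : ∀ Λ Γ : Cut G, ∀ a ∈ T.A Λ, ∀ b ∈ T.A Γ, a * b ∈ T.A (Λ + Γ))
    {x y : K} (hx : x ∈ R) (hy : y ∈ R) : T.mu (x * y) ≤ T.mu x + T.mu y :=
  T.mu_le_of_mem (hmul _ _ x (T.mem_mu hx) y (T.mem_mu hy))

end RTowerBase

theorem mu_basic_properties_general {K : Type u} {G : Type v}
    [Field K] [AddCommGroup G] [LinearOrder G] [IsOrderedAddMonoid G]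
    (S : VData K G) (R : Subring K)
    (T : RWeakTower S R) :
    (∀ Λ : Cut G, ∀ x ∈ R, (x ∈ T.A Λ ↔ T.toRTowerBase.mu x ≤ Λ)) ∧
    (∀ x ∈ R, ∀ y ∈ R,
      T.toRTowerBase.mu (x + y) ≤
        Cut.max (T.toRTowerBase.mu x) (T.toRTowerBase.mu y)) ∧
    ((∀ Λ Γ : Cut G, ∀ a ∈ T.A Λ, ∀ b ∈ T.A Γ, a * b ∈ T.A (Λ + Γ)) →
      ∀ x ∈ R, ∀ y ∈ R,
        T.toRTowerBase.mu (x * y) ≤ T.toRTowerBase.mu x + T.toRTowerBase.mu y) :=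
  ⟨fun _ _ hx => T.mem_iff_mu_le hx,
    fun x _ y _ => T.mu_add_le x y,
    fun hmul _ hx _ hy => T.mu_mul_le hmul hx hy⟩

/-- Let `(A[Λ])` be a weak tower of complements for a subring `R` of
`K` (containing the valuation ring and the image of `t`), and for `x ∈ R` let
`μ(x) := (supp x)⁺`.  Then: (1) `x ∈ A[Λ]` iff `μ(x) ≤ Λ`;
(2) `μ(x+y) ≤ max(μx, μy)`; (3) if the tower is multiplicative,
`μ(xy) ≤ μx + μy` (left sum of cuts). -/
theorem mu_basic_properties {K : Type u} {G : Type v}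
    [Field K] [AddCommGroup G] [LinearOrder G] [IsOrderedAddMonoid G]
    (S : VData K G) (R : Subring K)
    (hO : ∀ x : K, (0 : WithTop G) ≤ S.v x → x ∈ R)
    (ht : ∀ γ : G, S.t γ ∈ R)
    (T : RWeakTower S R) :
    (∀ Λ : Cut G, ∀ x ∈ R, (x ∈ T.A Λ ↔ T.toRTowerBase.mu x ≤ Λ)) ∧
    (∀ x ∈ R, ∀ y ∈ R,
      T.toRTowerBase.mu (x + y) ≤
        Cut.max (T.toRTowerBase.mu x) (T.toRTowerBase.mu y)) ∧
    ((∀ Λ Γ : Cut G, ∀ a ∈ T.A Λ, ∀ b ∈ T.A Γ, a * b ∈ T.A (Λ + Γ)) →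
      ∀ x ∈ R, ∀ y ∈ R,
        T.toRTowerBase.mu (x * y) ≤ T.toRTowerBase.mu x + T.toRTowerBase.mu y) :=
  mu_basic_properties_general S R T
end
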